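/- arXiv:2605.11546 — 10 statements merged into one kernel-verified Lean document; each statement's English description precedes it below -/
import Mathlib

section
/- Let d ≥ 1, let I be a finite index set, let {B_i}_{i∈I} be pairwise disjoint Lebesgue-measurable subsets of ℝ^d with 0 < vol(B_i) < ∞, let f : ℝ^d → ℝ be a probability density function vanishing outside ⋃_{i∈I} B_i, set p_i = ∫_{B_i} f(x) dx, g_i = p_i / vol(B_i), and define g(x) = Σ_{i∈I} g_i · 1_{B_i}(x). For each i with p_i > 0, let R_i(x) = f(x)/g_i on B_i, let L_i(λ) = vol({x ∈ B_i : R_i(x) ≥ λ}) / vol(B_i), and assume Λ_i = ess sup_{x∈B_i} R_i(x) < ∞. Then the Kullback–Leibler divergence satisfies the upper bound ∫ f(x) log₂(f(x)/g(x)) dx ≤ Σ_{i : p_i>0} p_i ∫_1^{Λ_i} (log₂ λ + log₂ e) L_i(λ) dλ. -/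
/-!
On a bin `B` with `p > 0`, the ratio `F = f / g` has mean one and is essentially bounded by `Λ`.
Since `log₂ λ + log₂ e` is the derivative of `λ log₂ λ` and is nonnegative for `λ ≥ 1`, every
`0 ≤ r ≤ Λ` satisfies `r log₂ r ≤ ∫_{(1, Λ]} (log₂ λ + log₂ e) 1[λ ≤ r] dλ` (with equality when
`r ≥ 1`, while the left side is nonpositive when `r ≤ 1`). Substituting `r = F x`, integrating
over the bin and exchanging the two integrals (Fubini) bounds `∫_B F log₂ F` by
`∫_1^Λ (log₂ λ + log₂ e) vol{x ∈ B | F x ≥ λ} dλ`; multiplying by `g = p / vol B` gives the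
contribution of `B`. Summing over the bins gives the theorem.
-/

open MeasureTheory Real Filter Set Function
open scoped ENNReal

section MulLogb

variable {b : ℝ}

lemma hasDerivAt_mul_logb {x : ℝ} (hx : x ≠ 0) :
    HasDerivAt (fun y ↦ y * logb b y) (logb b x + logb b (exp 1)) x := by
  rw [show (fun y ↦ y * logb b y) = fun y ↦ y * log y / log b by
    funext y; simp only [logb, mul_div_assoc]]
  exact ((hasDerivAt_mul_log hx).div_const (log b)).congr_deriv
    (by simp only [logb, log_exp, add_div])

lemma continuous_mul_logb : Continuous fun y ↦ y * logb b y := by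
  simpa only [logb, mul_div_assoc] using continuous_mul_log.div_const (log b)

lemma integral_logb_add_logb_exp {r : ℝ} (hr : 0 < r) :
    ∫ t in (1 : ℝ)..r, (logb b t + logb b (exp 1)) = r * logb b r := by
  have hderiv : ∀ t ∈ uIcc 1 r,
      HasDerivAt (fun y ↦ y * logb b y) (logb b t + logb b (exp 1)) t :=
    fun t ht ↦ hasDerivAt_mul_logb (lt_min zero_lt_one hr |>.trans_le ht.1).ne'
  rw [intervalIntegral.integral_eq_sub_of_hasDerivAt hderiv
    ((intervalIntegral.intervalIntegrable_log'.div_const _).add intervalIntegrable_const)]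
  simp

lemma logb_add_logb_exp_nonneg (hb : 1 < b) {t : ℝ} (ht : 1 ≤ t) :
    0 ≤ logb b t + logb b (exp 1) :=
  add_nonneg (logb_nonneg hb ht) (logb_nonneg hb (one_le_exp zero_le_one))

lemma integrableOn_logb_add_logb_exp (Λ : ℝ) :
    IntegrableOn (fun t ↦ logb b t + logb b (exp 1)) (Ioc 1 Λ) :=
  ((intervalIntegral.intervalIntegrable_log'.div_const _).add intervalIntegrable_const).1

lemma mul_logb_le_setIntegral_mul_indicator (hb : 1 < b) {r Λ : ℝ} (hr : 0 ≤ r) (hrΛ : r ≤ Λ) :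
    r * logb b r ≤ ∫ t in Ioc 1 Λ, (logb b t + logb b (exp 1)) * (Iic r).indicator 1 t := by
  rcases le_or_gt r 1 with hr1 | hr1
  · calc r * logb b r ≤ 0 := mul_nonpos_of_nonneg_of_nonpos hr (logb_nonpos hb hr hr1)
      _ ≤ _ := setIntegral_nonneg measurableSet_Ioc fun t ht ↦
          mul_nonneg (logb_add_logb_exp_nonneg hb ht.1.le) (indicator_nonneg (by simp) t)
  · have hind : (fun t ↦ (logb b t + logb b (exp 1)) * (Iic r).indicator 1 t)
        = (Iic r).indicator fun t ↦ logb b t + logb b (exp 1) := by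
      ext t; simp [indicator_apply]
    rw [hind, setIntegral_indicator measurableSet_Iic, Ioc_inter_Iic, min_eq_right hrΛ,
      ← intervalIntegral.integral_of_le hr1.le, integral_logb_add_logb_exp (by linarith)]

end MulLogb

section LayerCake

variable {α : Type*} [MeasurableSpace α] {μ : Measure α} {b Λ : ℝ} {F : α → ℝ}

lemma integrable_mul_logb [IsFiniteMeasure μ] (hF : Measurable F) (hF0 : 0 ≤ᵐ[μ] F)
    (hFΛ : ∀ᵐ x ∂μ, F x ≤ Λ) : Integrable (fun x ↦ F x * logb b (F x)) μ := by
  obtain ⟨C, hC⟩ := isCompact_Icc.exists_bound_of_continuousOn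
    (continuous_mul_logb (b := b)).continuousOn (s := Icc 0 Λ)
  refine .of_bound (continuous_mul_logb.measurable.comp hF).aestronglyMeasurable C ?_
  filter_upwards [hF0, hFΛ] with x h0 hΛ using hC _ ⟨h0, hΛ⟩

lemma integrable_mul_indicator_Iic [IsFiniteMeasure μ] (hF : Measurable F) {φ : ℝ → ℝ}
    {s : Set ℝ} (hφ : IntegrableOn φ s) :
    Integrable (uncurry fun x t ↦ φ t * (Iic (F x)).indicator 1 t)
      (μ.prod (volume.restrict s)) := by
  have hmeas : Measurable (uncurry fun x t ↦ (Iic (F x)).indicator (1 : ℝ → ℝ) t) :=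
    measurable_one.indicator (measurableSet_le measurable_snd (hF.comp measurable_fst))
  refine (hφ.norm.comp_snd μ).mono' (hφ.1.comp_snd.mul hmeas.aestronglyMeasurable) ?_
  refine ae_of_all _ fun ⟨x, t⟩ ↦ ?_
  simp only [uncurry_apply_pair, norm_mul]
  exact mul_le_of_le_one_right (norm_nonneg _) ((norm_indicator_le_norm_self _ _).trans (by simp))

lemma integral_setIntegral_mul_indicator_Iic [IsFiniteMeasure μ] (hF : Measurable F)
    {φ : ℝ → ℝ} {s : Set ℝ} (hφ : IntegrableOn φ s) :
    ∫ x, (∫ t in s, φ t * (Iic (F x)).indicator 1 t) ∂μ = ∫ t in s, φ t * μ.real {x | t ≤ F x} := by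
  rw [integral_integral_swap (integrable_mul_indicator_Iic hF hφ)]
  refine integral_congr_ae (ae_of_all _ fun t ↦ ?_)
  have hset : (fun x ↦ (Iic (F x)).indicator (1 : ℝ → ℝ) t) = {x | t ≤ F x}.indicator 1 := by
    ext x; simp [indicator_apply]
  dsimp only
  rw [integral_const_mul, hset, integral_indicator_one (measurableSet_le measurable_const hF)]

theorem integral_mul_logb_le [IsFiniteMeasure μ] (hb : 1 < b) (hF : Measurable F)
    (hF0 : 0 ≤ᵐ[μ] F) (hFΛ : ∀ᵐ x ∂μ, F x ≤ Λ) :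
    ∫ x, F x * logb b (F x) ∂μ
      ≤ ∫ t in Ioc 1 Λ, (logb b t + logb b (exp 1)) * μ.real {x | t ≤ F x} := by
  have hφ := integrableOn_logb_add_logb_exp (b := b) Λ
  rw [← integral_setIntegral_mul_indicator_Iic hF hφ]
  refine integral_mono_ae (integrable_mul_logb hF hF0 hFΛ)
    (integrable_mul_indicator_Iic hF hφ).integral_prod_left ?_
  filter_upwards [hF0, hFΛ] with x h0 hΛ using mul_logb_le_setIntegral_mul_indicator hb h0 hΛ

end LayerCake

section Bin

variable {α : Type*} [MeasurableSpace α] {μ : Measure α} {s : Set α} {f : α → ℝ}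

lemma measureReal_pos_of_setIntegral_pos (hμs : μ s ≠ ∞) (h : 0 < ∫ x in s, f x ∂μ) :
    0 < μ.real s := by
  refine ENNReal.toReal_pos (fun hs ↦ ?_) hμs
  rw [Measure.restrict_eq_zero.2 hs, integral_zero_measure] at h
  exact h.false

lemma mul_logb_div_eq (b : ℝ) {c : ℝ} (hc : c ≠ 0) (a : ℝ) :
    a * logb b (a / c) = c * (a / c * logb b (a / c)) := by
  field_simp

lemma integrableOn_mul_logb_div (hμs : μ s ≠ ∞) (hf : Measurable f)
    (hf0 : 0 ≤ᵐ[μ.restrict s] f) {b c Λ : ℝ} (hc : 0 < c)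
    (hΛ : ∀ᵐ x ∂μ.restrict s, f x / c ≤ Λ) :
    IntegrableOn (fun x ↦ f x * logb b (f x / c)) s μ := by
  have : IsFiniteMeasure (μ.restrict s) := isFiniteMeasure_restrict.2 hμs
  have hF0 : 0 ≤ᵐ[μ.restrict s] fun x ↦ f x / c := by
    filter_upwards [hf0] with x hx using div_nonneg hx hc.le
  simp only [mul_logb_div_eq b hc.ne']
  exact ((integrable_mul_logb (hf.div_const c) hF0 hΛ).const_mul c)

theorem setIntegral_mul_logb_div_le (hμs : μ s ≠ ∞) (hf : Measurable f)
    (hf0 : 0 ≤ᵐ[μ.restrict s] f) (hfs : IntegrableOn f s μ) {b p c Λ : ℝ} (hb : 1 < b)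
    (hp : p = ∫ x in s, f x ∂μ) (hp0 : 0 < p) (hc : c = p / μ.real s) {R : α → ℝ}
    (hR : ∀ x ∈ s, R x = f x / c) (hΛ : ∀ᵐ x ∂μ.restrict s, f x / c ≤ Λ) :
    ∫ x in s, f x * logb b (f x / c) ∂μ
      ≤ p * ∫ t in (1 : ℝ)..Λ,
          (logb b t + logb b (exp 1)) * (μ.real {x ∈ s | t ≤ R x} / μ.real s) := by
  have : IsFiniteMeasure (μ.restrict s) := isFiniteMeasure_restrict.2 hμs
  have hμs0 : 0 < μ.real s := measureReal_pos_of_setIntegral_pos hμs (hp ▸ hp0)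
  have hc0 : 0 < c := hc ▸ div_pos hp0 hμs0
  have hF0 : 0 ≤ᵐ[μ.restrict s] fun x ↦ f x / c := by
    filter_upwards [hf0] with x hx using div_nonneg hx hc0.le
  -- `f / c` has mean one on `s`, so its essential bound is at least one.
  have hΛ1 : 1 ≤ Λ := by
    refine (le_mul_iff_one_le_left hμs0).1 ?_
    calc μ.real s = ∫ x in s, f x / c ∂μ := by
          rw [integral_div, ← hp, hc]; field_simp
      _ ≤ ∫ _ in s, Λ ∂μ := integral_mono_ae (hfs.div_const c) (integrable_const Λ) hΛ
      _ = Λ * μ.real s := by rw [setIntegral_const, smul_eq_mul, mul_comm]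
  have hlevel : ∀ t, (μ.restrict s).real {x | t ≤ f x / c} = μ.real {x ∈ s | t ≤ R x} := by
    intro t
    rw [measureReal_restrict_apply (measurableSet_le measurable_const (hf.div_const c))]
    congr 1
    ext x
    simp only [mem_inter_iff, mem_ofPred_eq]
    exact ⟨fun ⟨ht, hx⟩ ↦ ⟨hx, hR x hx ▸ ht⟩, fun ⟨hx, ht⟩ ↦ ⟨hR x hx ▸ ht, hx⟩⟩
  calc ∫ x in s, f x * logb b (f x / c) ∂μ
      = c * ∫ x in s, f x / c * logb b (f x / c) ∂μ := by
        simp only [mul_logb_div_eq b hc0.ne', integral_const_mul]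
    _ ≤ c * ∫ t in Ioc 1 Λ, (logb b t + logb b (exp 1)) * (μ.restrict s).real {x | t ≤ f x / c} :=
        mul_le_mul_of_nonneg_left (integral_mul_logb_le hb (hf.div_const c) hF0 hΛ) hc0.le
    _ = _ := by
        simp only [hlevel, ← mul_div_assoc]
        rw [intervalIntegral.integral_of_le hΛ1, integral_div, hc]
        field_simp

end Bin

section Partition

variable {α ι : Type*} [Fintype ι] {B : ι → Set α}

lemma sum_indicator_const_of_mem {M : Type*} [AddCommMonoid M] (hB : Pairwise (Disjoint on B))
    (c : ι → M) {x : α} {j : ι} (hx : x ∈ B j) :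
    ∑ i, (B i).indicator (fun _ ↦ c i) x = c j := by
  rw [Finset.sum_eq_single j (fun i _ hij ↦ indicator_of_notMem
    (disjoint_left.1 (hB hij.symm) hx) _) (by simp), indicator_of_mem hx]

lemma integral_eq_sum_setIntegral_of_forall_compl_eq_zero [MeasurableSpace α] {E : Type*}
    [NormedAddCommGroup E] [NormedSpace ℝ E] {μ : Measure α} (hB : ∀ i, MeasurableSet (B i))
    (hBd : Pairwise (Disjoint on B)) {h : α → E}
    (h0 : ∀ x, x ∉ ⋃ i, B i → h x = 0) (hint : ∀ i, IntegrableOn h (B i) μ) :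
    ∫ x, h x ∂μ = ∑ i, ∫ x in B i, h x ∂μ := by
  rw [← setIntegral_eq_integral_of_forall_compl_eq_zero h0, integral_iUnion_fintype hB hBd hint]

end Partition

theorem kl_divergence_upper_bound_general
    {d : ℕ} {I : Type*} [Fintype I]
    (B : I → Set (Fin d → ℝ))
    (hBmeas : ∀ i, MeasurableSet (B i))
    (hBdisj : Pairwise (Function.onFun Disjoint B))
    (hBfin : ∀ i, volume (B i) < ⊤)
    (f : (Fin d → ℝ) → ℝ)
    (hf_meas : Measurable f)
    (hf_nonneg : ∀ x, 0 ≤ f x)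
    (hf_int : ∫ x, f x = 1)
    (hf_supp : ∀ x, x ∉ ⋃ i, B i → f x = 0)
    (p : I → ℝ) (hp : ∀ i, p i = ∫ x in B i, f x)
    (gi : I → ℝ) (hgi : ∀ i, gi i = p i / (volume (B i)).toReal)
    (g : (Fin d → ℝ) → ℝ)
    (hg : ∀ x, g x = ∑ i, (B i).indicator (fun _ => gi i) x)
    (R : I → (Fin d → ℝ) → ℝ)
    (hR : ∀ i, 0 < p i → ∀ x ∈ B i, R i x = f x / gi i)
    (L : I → ℝ → ℝ)
    (hL : ∀ i, 0 < p i → ∀ lam : ℝ,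
      L i lam = (volume {x ∈ B i | lam ≤ R i x}).toReal / (volume (B i)).toReal)
    (Λ : I → ℝ)
    (hΛbdd : ∀ i, 0 < p i →
      IsBoundedUnder (· ≤ ·) (ae (volume.restrict (B i))) (R i))
    (hΛ : ∀ i, 0 < p i → Λ i = essSup (R i) (volume.restrict (B i))) :
    ∫ x, f x * Real.logb 2 (f x / g x)
      ≤ ∑ i ∈ Finset.univ.filter (fun i => 0 < p i),
          p i * ∫ lam in (1:ℝ)..(Λ i),
            (Real.logb 2 lam + Real.logb 2 (Real.exp 1)) * L i lam := by
  have hf := integrable_of_integral_eq_one hf_int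
  -- Bins of zero mass have `gi i = 0`, so there the integrand is `f x * logb 2 0 = 0`.
  have hgi0 : ∀ i, ¬ 0 < p i → gi i = 0 := fun i hpi ↦ by
    rw [hgi, le_antisymm (not_lt.1 hpi)
      (hp i ▸ setIntegral_nonneg (hBmeas i) fun x _ ↦ hf_nonneg x), zero_div]
  have hgi_pos : ∀ i, 0 < p i → 0 < gi i := fun i hpi ↦
    hgi i ▸ div_pos hpi (measureReal_pos_of_setIntegral_pos (hBfin i).ne (hp i ▸ hpi))
  have hbound : ∀ i, 0 < p i → ∀ᵐ x ∂volume.restrict (B i), f x / gi i ≤ Λ i := fun i hpi ↦ by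
    filter_upwards [ae_le_essSup (hΛbdd i hpi), ae_restrict_mem (hBmeas i)] with x hx hxB
    rwa [← hR i hpi x hxB, hΛ i hpi]
  have hint : ∀ i, IntegrableOn (fun x ↦ f x * logb 2 (f x / gi i)) (B i) := fun i ↦ by
    by_cases hpi : 0 < p i
    · exact integrableOn_mul_logb_div (hBfin i).ne hf_meas (ae_of_all _ hf_nonneg)
        (hgi_pos i hpi) (hbound i hpi)
    · simp [hgi0 i hpi]
  have hg_eq : ∀ i, EqOn (fun x ↦ f x * logb 2 (f x / g x))
      (fun x ↦ f x * logb 2 (f x / gi i)) (B i) :=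
    fun i x hx ↦ by simp only [hg x, sum_indicator_const_of_mem hBdisj gi hx]
  calc ∫ x, f x * logb 2 (f x / g x)
      = ∑ i, ∫ x in B i, f x * logb 2 (f x / gi i) := by
        rw [integral_eq_sum_setIntegral_of_forall_compl_eq_zero hBmeas hBdisj
          (fun x hx ↦ by simp [hf_supp x hx]) fun i ↦ (hint i).congr_fun (hg_eq i).symm (hBmeas i)]
        exact Finset.sum_congr rfl fun i _ ↦ setIntegral_congr_fun (hBmeas i) (hg_eq i)
    _ ≤ ∑ i, if 0 < p i then p i * ∫ lam in (1:ℝ)..(Λ i),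
            (logb 2 lam + logb 2 (exp 1)) * L i lam else 0 := by
        refine Finset.sum_le_sum fun i _ ↦ ?_
        split_ifs with hpi
        · simpa only [hL i hpi, measureReal_def] using
            setIntegral_mul_logb_div_le (hBfin i).ne hf_meas (ae_of_all _ hf_nonneg)
              hf.integrableOn one_lt_two (hp i) hpi (hgi i) (hR i hpi) (hbound i hpi)
        · simp [hgi0 i hpi]
    _ = _ := (Finset.sum_filter _ _).symm

/-- Upper bound on the KL divergence between a density and its
piecewise-uniform bin approximation, in terms of superlevel-set widths. -/
theorem kl_divergence_upper_bound
    {d : ℕ} (hd : 1 ≤ d) {I : Type*} [Fintype I]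
    (B : I → Set (Fin d → ℝ))
    (hBmeas : ∀ i, MeasurableSet (B i))
    (hBdisj : Pairwise (Function.onFun Disjoint B))
    (hBpos : ∀ i, 0 < volume (B i))
    (hBfin : ∀ i, volume (B i) < ⊤)
    (f : (Fin d → ℝ) → ℝ)
    (hf_meas : Measurable f)
    (hf_nonneg : ∀ x, 0 ≤ f x)
    (hf_int : ∫ x, f x = 1)
    (hf_supp : ∀ x, x ∉ ⋃ i, B i → f x = 0)
    (p : I → ℝ) (hp : ∀ i, p i = ∫ x in B i, f x)
    (gi : I → ℝ) (hgi : ∀ i, gi i = p i / (volume (B i)).toReal)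
    (g : (Fin d → ℝ) → ℝ)
    (hg : ∀ x, g x = ∑ i, (B i).indicator (fun _ => gi i) x)
    (R : I → (Fin d → ℝ) → ℝ)
    (hR : ∀ i, 0 < p i → ∀ x ∈ B i, R i x = f x / gi i)
    (L : I → ℝ → ℝ)
    (hL : ∀ i, 0 < p i → ∀ lam : ℝ,
      L i lam = (volume {x ∈ B i | lam ≤ R i x}).toReal / (volume (B i)).toReal)
    (Λ : I → ℝ)
    (hΛbdd : ∀ i, 0 < p i →
      IsBoundedUnder (· ≤ ·) (ae (volume.restrict (B i))) (R i))
    (hΛ : ∀ i, 0 < p i → Λ i = essSup (R i) (volume.restrict (B i))) :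
    ∫ x, f x * Real.logb 2 (f x / g x)
      ≤ ∑ i ∈ Finset.univ.filter (fun i => 0 < p i),
          p i * ∫ lam in (1:ℝ)..(Λ i),
            (Real.logb 2 lam + Real.logb 2 (Real.exp 1)) * L i lam :=
  kl_divergence_upper_bound_general B hBmeas hBdisj hBfin f hf_meas hf_nonneg hf_int hf_supp p hp gi
    hgi g hg R hR L hL Λ hΛbdd hΛ
end

section
/- Let B ⊆ ℝ^d be Lebesgue-measurable with 0 < vol(B) < ∞, let f be a probability density function with p = ∫_B f > 0 and g = p/vol(B). Suppose there is a measurable set P ⊆ B with vol(P) = w containing the above-average region {x ∈ B : f(x) ≥ g}, and a constant H ≥ g with f(x) ≤ H for all x ∈ P. Then ∫_B f(x) log₂(f(x)/g) dx ≤ w · H · log₂(H/g). -/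
/-!
Off `P` the integrand `f log₂ (f / g)` is nonpositive, since `f < g` there. On `P` we have
`f ≤ H` with `g ≤ H`, and `t ↦ t log₂ (t / g)` is bounded on `[0, H]` by its value `H log₂ (H / g)`
at the right end point. Hence the integrand is dominated by `H log₂ (H / g) · 1_P` on `B`, whose
integral is the right-hand side; integrability follows from the lower bound `t log (t / g) ≥ t - g`.
-/

open MeasureTheory Real

namespace Real

variable {b g t H : ℝ}

lemma mul_logb_div_nonpos (hb : 1 < b) (ht : 0 ≤ t) (htg : t ≤ g) : t * logb b (t / g) ≤ 0 :=
  mul_nonpos_of_nonneg_of_nonpos ht <|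
    logb_nonpos hb (div_nonneg ht (ht.trans htg)) (div_le_one_of_le₀ htg (ht.trans htg))

lemma mul_logb_div_le_mul_logb_div (hb : 1 < b) (hg : 0 < g) (ht : 0 ≤ t) (htH : t ≤ H)
    (hgH : g ≤ H) : t * logb b (t / g) ≤ H * logb b (H / g) := by
  rcases le_total t g with htg | hgt
  · exact (mul_logb_div_nonpos hb ht htg).trans <|
      mul_nonneg (hg.trans_le hgH).le (logb_nonneg hb ((one_le_div hg).2 hgH))
  · have ht_pos : 0 < t := hg.trans_le hgt
    have h_log_nonneg : 0 ≤ logb b (t / g) := logb_nonneg hb ((one_le_div hg).2 hgt)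
    gcongr
    exact ht.trans htH

lemma neg_div_log_le_mul_logb_div (hb : 1 < b) (hg : 0 < g) (ht : 0 ≤ t) :
    -(g / log b) ≤ t * logb b (t / g) := by
  have h_sub_le : t - g ≤ t * log (t / g) := by
    have := mul_le_mul_of_nonneg_left (self_sub_one_le_mul_log (div_nonneg ht hg.le)) hg.le
    field_simp at this
    linarith
  rw [logb, ← mul_div_assoc, ← neg_div]
  gcongr
  · exact (log_pos hb).le
  · linarith

end Real

section

variable {α : Type*} [MeasurableSpace α] {μ : Measure α} {s t : Set α} {φ : α → ℝ}

lemma integrableOn_of_forall_mem_Icc (hs : MeasurableSet s) (hμs : μ s ≠ ⊤)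
    (hφ : AEStronglyMeasurable φ μ) {a b : ℝ} (h : ∀ x ∈ s, φ x ∈ Set.Icc a b) :
    IntegrableOn φ s μ :=
  Measure.integrableOn_of_bounded hμs hφ (M := max |a| |b|) <|
    (ae_restrict_iff' hs).2 <| ae_of_all _ fun x hx => abs_le_max_abs_abs (h x hx).1 (h x hx).2

lemma setIntegral_le_measureReal_mul (hs : MeasurableSet s) (ht : MeasurableSet t)
    (hμt : μ t ≠ ⊤) (hts : t ⊆ s) (hφ : IntegrableOn φ s μ) {c : ℝ}
    (h_on : ∀ x ∈ t, φ x ≤ c) (h_off : ∀ x ∈ s \ t, φ x ≤ 0) :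
    ∫ x in s, φ x ∂μ ≤ μ.real t * c := by
  have h_ind : Integrable (t.indicator fun _ => c) μ :=
    (integrable_indicator_iff ht).2 (integrableOn_const hμt)
  calc ∫ x in s, φ x ∂μ ≤ ∫ x in s, t.indicator (fun _ => c) x ∂μ := by
        refine setIntegral_mono_on hφ h_ind.integrableOn hs fun x hx => ?_
        by_cases hxt : x ∈ t
        · simpa [hxt] using h_on x hxt
        · simpa [hxt] using h_off x ⟨hx, hxt⟩
    _ = μ.real t * c := by
        rw [setIntegral_indicator ht, Set.inter_eq_self_of_subset_right hts, setIntegral_const,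
          smul_eq_mul]

end

theorem one_peak_per_bin_bound_general
    {d : ℕ}
    (B : Set (Fin d → ℝ)) (hBmeas : MeasurableSet B)
    (hBpos : 0 < volume B) (hBfin : volume B < ⊤)
    (f : (Fin d → ℝ) → ℝ)
    (hf_meas : Measurable f)
    (hf_nonneg : ∀ x, 0 ≤ f x)
    (p : ℝ) (hppos : 0 < p)
    (g : ℝ) (hg : g = p / (volume B).toReal)
    (P : Set (Fin d → ℝ)) (hPmeas : MeasurableSet P) (hPB : P ⊆ B)
    (w : ℝ) (hw : w = (volume P).toReal)
    (habove : {x ∈ B | g ≤ f x} ⊆ P)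
    (H : ℝ) (hHg : g ≤ H) (hH : ∀ x ∈ P, f x ≤ H) :
    ∫ x in B, f x * Real.logb 2 (f x / g) ≤ w * H * Real.logb 2 (H / g) := by
  have hg_pos : 0 < g := hg ▸ div_pos hppos (ENNReal.toReal_pos hBpos.ne' hBfin.ne)
  have h_below : ∀ x ∈ B \ P, f x < g := fun x hx => not_le.1 fun h => hx.2 (habove ⟨hx.1, h⟩)
  have hf_le : ∀ x ∈ B, f x ≤ H := fun x hx => by
    by_cases hxP : x ∈ P
    · exact hH x hxP
    · exact (h_below x ⟨hx, hxP⟩).le.trans hHg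
  have h_int : IntegrableOn (fun x => f x * logb 2 (f x / g)) B :=
    integrableOn_of_forall_mem_Icc hBmeas hBfin.ne (hf_meas.mul ((hf_meas.div_const g).log.div_const _)).aestronglyMeasurable fun x hx =>
      ⟨neg_div_log_le_mul_logb_div one_lt_two hg_pos (hf_nonneg x),
        mul_logb_div_le_mul_logb_div one_lt_two hg_pos (hf_nonneg x) (hf_le x hx) hHg⟩
  calc ∫ x in B, f x * logb 2 (f x / g) ≤ volume.real P * (H * logb 2 (H / g)) :=
        setIntegral_le_measureReal_mul hBmeas hPmeas (measure_ne_top_of_subset hPB hBfin.ne) hPB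
          h_int
          (fun x hx => mul_logb_div_le_mul_logb_div one_lt_two hg_pos (hf_nonneg x) (hH x hx) hHg)
          (fun x hx => mul_logb_div_nonpos one_lt_two (hf_nonneg x) (h_below x hx).le)
    _ = w * H * logb 2 (H / g) := by rw [hw, measureReal_def, mul_assoc]

/-- One-peak-per-bin height–width upper bound on the per-bin
contribution to the KL divergence. -/
theorem one_peak_per_bin_bound
    {d : ℕ}
    (B : Set (Fin d → ℝ)) (hBmeas : MeasurableSet B)
    (hBpos : 0 < volume B) (hBfin : volume B < ⊤)
    (f : (Fin d → ℝ) → ℝ)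
    (hf_meas : Measurable f)
    (hf_nonneg : ∀ x, 0 ≤ f x)
    (hf_int : ∫ x, f x = 1)
    (p : ℝ) (hp : p = ∫ x in B, f x) (hppos : 0 < p)
    (g : ℝ) (hg : g = p / (volume B).toReal)
    (P : Set (Fin d → ℝ)) (hPmeas : MeasurableSet P) (hPB : P ⊆ B)
    (w : ℝ) (hw : w = (volume P).toReal)
    (habove : {x ∈ B | g ≤ f x} ⊆ P)
    (H : ℝ) (hHg : g ≤ H) (hH : ∀ x ∈ P, f x ≤ H) :
    ∫ x in B, f x * Real.logb 2 (f x / g) ≤ w * H * Real.logb 2 (H / g) :=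
  one_peak_per_bin_bound_general B hBmeas hBpos hBfin f hf_meas hf_nonneg p hppos g hg P hPmeas hPB
    w hw habove H hHg hH
end

section
/- Let f : ℝ → ℝ be a probability density function, and let a ∈ ℝ with a ≠ 0. Define f_a(y) = f(y/a)/|a| (the density of aX when X has density f). If the function x ↦ f(x) · log₂(|x| · f(x)) is Lebesgue integrable, then ∫_ℝ f_a(y) log₂(|y| · f_a(y)) dy = ∫_ℝ f(x) log₂(|x| · f(x)) dx. In particular, the differential floating-point entropy −E[log₂(|X| f_X(X))] is invariant under scaling X by a nonzero constant. -/
open MeasureTheory Real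

/-- The differential floating-point entropy is invariant under
scaling by a nonzero constant. -/
theorem fp_entropy_scale_invariance
    (f : ℝ → ℝ)
    (hf_meas : Measurable f)
    (hf_nonneg : ∀ x, 0 ≤ f x)
    (hf_int : ∫ x, f x = 1)
    (a : ℝ) (ha : a ≠ 0)
    (fa : ℝ → ℝ) (hfa : ∀ y, fa y = f (y / a) / |a|)
    (hint : Integrable (fun x => f x * Real.logb 2 (|x| * f x))) :
    ∫ y, fa y * Real.logb 2 (|y| * fa y)
      = ∫ x, f x * Real.logb 2 (|x| * f x) := by
  have ha' : |a| ≠ 0 := abs_ne_zero.mpr ha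
  have key : ∀ y : ℝ, fa y * Real.logb 2 (|y| * fa y)
      = |a|⁻¹ * (f (y / a) * Real.logb 2 (|y / a| * f (y / a))) := by
    intro y
    rw [hfa]
    have h1 : |y| * (f (y / a) / |a|) = |y / a| * f (y / a) := by
      rw [abs_div]
      field_simp
    rw [h1]
    field_simp
  simp_rw [key]
  rw [MeasureTheory.integral_const_mul,
    MeasureTheory.Measure.integral_comp_div (fun x => f x * Real.logb 2 (|x| * f x)) a]
  simp [smul_eq_mul, ← mul_assoc, inv_mul_cancel₀ ha']
end

section
/- Let d ≥ 1, let f : ℝ^d → ℝ be a probability density function, and let A = diag(a_1, …, a_d) be a diagonal matrix with a_j ≠ 0 for every j. Define f_A(y) = f(A⁻¹y)/|det A| (the density of AX when X has density f). If each function x ↦ f(x) · log₂(|x_j| f(x)) is Lebesgue integrable and f·log₂ f is Lebesgue integrable, then −∫_{ℝ^d} f_A(y) log₂ f_A(y) dy − Σ_{j=1}^d ∫_{ℝ^d} f_A(y) log₂|y_j| dy = −∫_{ℝ^d} f(x) log₂ f(x) dx − Σ_{j=1}^d ∫_{ℝ^d} f(x) log₂|x_j| dx. -/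
open MeasureTheory Real

/-- Change of variables under a diagonal scaling of `ℝ^d`. -/
lemma cv_diag {d : ℕ} (a : Fin d → ℝ) (ha : ∀ j, a j ≠ 0)
    (g : (Fin d → ℝ) → ℝ) :
    ∫ y, g y = |∏ j, a j| * ∫ x : Fin d → ℝ, g (fun j => a j * x j) := by
  classical
  have hdet : Matrix.det (Matrix.diagonal a) ≠ 0 := by
    rw [Matrix.det_diagonal]
    exact Finset.prod_ne_zero_iff.2 fun j _ => ha j
  have hmap := Real.map_matrix_volume_pi_eq_smul_volume_pi (ι := Fin d) hdet
  -- the measurable equivalence given by coordinatewise multiplication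
  let e : (Fin d → ℝ) ≃ᵐ (Fin d → ℝ) :=
    MeasurableEquiv.piCongrRight fun j =>
      (Homeomorph.mulLeft₀ (a j) (ha j)).toMeasurableEquiv
  have he : ∀ x, e x = fun j => a j * x j := fun x => rfl
  have hcoe : (Matrix.toLin' (Matrix.diagonal a)) = (e : (Fin d → ℝ) → (Fin d → ℝ)) := by
    funext x
    rw [he]
    funext j
    simp [Matrix.toLin'_apply, Matrix.mulVec_diagonal]
  rw [hcoe] at hmap
  have h1 : ∫ y, g y ∂(Measure.map e volume) = ∫ x, g (e x) := by
    exact MeasureTheory.integral_map_equiv e g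
  rw [hmap] at h1
  rw [integral_smul_measure] at h1
  have hprodne : (∏ j, a j) ≠ 0 := by
    rwa [Matrix.det_diagonal] at hdet
  have habs : |(Matrix.det (Matrix.diagonal a))⁻¹| = |∏ j, a j|⁻¹ := by
    rw [Matrix.det_diagonal, abs_inv]
  rw [habs] at h1
  have htoReal : (ENNReal.ofReal |∏ j, a j|⁻¹).toReal = |∏ j, a j|⁻¹ :=
    ENNReal.toReal_ofReal (by positivity)
  rw [htoReal] at h1
  have hpos : (0:ℝ) < |∏ j, a j| := abs_pos.2 hprodne
  simp only [he] at h1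
  rw [smul_eq_mul] at h1
  rw [← h1]
  field_simp

/-- The approximate floating-point entropy of a random vector is
invariant under an invertible diagonal linear transformation. -/
theorem fp_entropy_diagonal_invariance
    {d : ℕ} (hd : 1 ≤ d)
    (f : (Fin d → ℝ) → ℝ)
    (hf_meas : Measurable f)
    (hf_nonneg : ∀ x, 0 ≤ f x)
    (hf_int : ∫ x, f x = 1)
    (a : Fin d → ℝ) (ha : ∀ j, a j ≠ 0)
    (fA : (Fin d → ℝ) → ℝ)
    (hfA : ∀ y, fA y = f (fun j => y j / a j) / |∏ j, a j|)
    (hint : ∀ j, Integrable (fun x => f x * Real.logb 2 (|x j| * f x)))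
    (hflogf : Integrable (fun x => f x * Real.logb 2 (f x))) :
    (-(∫ y, fA y * Real.logb 2 (fA y))
        - ∑ j, ∫ y, fA y * Real.logb 2 |y j|)
      = (-(∫ x, f x * Real.logb 2 (f x))
        - ∑ j, ∫ x, f x * Real.logb 2 |x j|) := by
  classical
  set c : ℝ := |∏ j, a j| with hc_def
  have hprodne : (∏ j, a j) ≠ 0 := Finset.prod_ne_zero_iff.2 fun j _ => ha j
  have hc_pos : (0:ℝ) < c := abs_pos.2 hprodne
  have hc_ne : c ≠ 0 := hc_pos.ne'
  -- f is integrable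
  have hf_integrable : Integrable f := by
    by_contra h
    rw [integral_undef h] at hf_int
    exact zero_ne_one hf_int
  -- fA at a transformed point
  have hfA_comp : ∀ x, fA (fun j => a j * x j) = f x / c := by
    intro x
    rw [hfA]
    congr 1
    congr 1
    funext j
    exact mul_div_cancel_left₀ _ (ha j)
  -- a.e. the j-th coordinate is nonzero
  have hae_ne : ∀ j : Fin d, ∀ᵐ x : (Fin d → ℝ), x j ≠ (0:ℝ) := by
    intro j
    exact MeasureTheory.Measure.ae_eval_ne (fun _ : Fin d => (volume : Measure ℝ)) j 0
  -- integrability of f * logb |x j|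
  have hint_coord : ∀ j : Fin d, Integrable (fun x => f x * Real.logb 2 |x j|) := by
    intro j
    have : (fun x => f x * Real.logb 2 |x j|) =ᵐ[volume]
        fun x => f x * Real.logb 2 (|x j| * f x) - f x * Real.logb 2 (f x) := by
      filter_upwards [hae_ne j] with x hx
      rcases eq_or_lt_of_le (hf_nonneg x) with h0 | hpos
      · simp [← h0]
      · rw [Real.logb_mul (abs_ne_zero.2 hx) hpos.ne']
        ring
    exact (((hint j).sub hflogf).congr this.symm)
  -- value of ∫ f * logb c
  have hconst : ∀ r : ℝ, ∫ x, f x * r = r := by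
    intro r
    rw [integral_mul_const, hf_int, one_mul]
  -- Term 1: entropy term of fA
  have hterm1 : ∫ y, fA y * Real.logb 2 (fA y)
      = (∫ x, f x * Real.logb 2 (f x)) - Real.logb 2 c := by
    rw [cv_diag a ha (fun y => fA y * Real.logb 2 (fA y))]
    have heq : ∀ x, c * (fA (fun j => a j * x j) * Real.logb 2 (fA (fun j => a j * x j)))
        = f x * Real.logb 2 (f x) - f x * Real.logb 2 c := by
      intro x
      rw [hfA_comp x]
      rcases eq_or_lt_of_le (hf_nonneg x) with h0 | hpos
      · simp [← h0]
      · rw [Real.logb_div hpos.ne' hc_ne]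
        field_simp
    rw [← integral_const_mul]
    calc ∫ x : Fin d → ℝ, c * (fA (fun j => a j * x j) * Real.logb 2 (fA (fun j => a j * x j)))
        = ∫ (x : Fin d → ℝ), (f x * Real.logb 2 (f x) - f x * Real.logb 2 c) := by
          exact integral_congr_ae (Filter.Eventually.of_forall heq)
      _ = (∫ x, f x * Real.logb 2 (f x)) - ∫ x, f x * Real.logb 2 c :=
          integral_sub hflogf (hf_integrable.mul_const _)
      _ = (∫ x, f x * Real.logb 2 (f x)) - Real.logb 2 c := by rw [hconst]
  -- Term 2: coordinate terms of fA
  have hterm2 : ∀ j : Fin d, ∫ y, fA y * Real.logb 2 |y j|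
      = (∫ x, f x * Real.logb 2 |x j|) + Real.logb 2 |a j| := by
    intro j
    rw [cv_diag a ha (fun y => fA y * Real.logb 2 |y j|)]
    have heq : ∀ᵐ x : (Fin d → ℝ),
        c * (fA (fun j' => a j' * x j') * Real.logb 2 |a j * x j|)
        = f x * Real.logb 2 |x j| + f x * Real.logb 2 |a j| := by
      filter_upwards [hae_ne j] with x hx
      rw [hfA_comp x, abs_mul,
        Real.logb_mul (abs_ne_zero.2 (ha j)) (abs_ne_zero.2 hx)]
      field_simp
      ring
    rw [← integral_const_mul]
    calc ∫ x : Fin d → ℝ, c * (fA (fun j' => a j' * x j') * Real.logb 2 |a j * x j|)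
        = ∫ (x : Fin d → ℝ), (f x * Real.logb 2 |x j| + f x * Real.logb 2 |a j|) :=
          integral_congr_ae heq
      _ = (∫ x, f x * Real.logb 2 |x j|) + ∫ x, f x * Real.logb 2 |a j| :=
          integral_add (hint_coord j) (hf_integrable.mul_const _)
      _ = (∫ x, f x * Real.logb 2 |x j|) + Real.logb 2 |a j| := by rw [hconst]
  -- sum of logs of |a j| equals logb c
  have hsumlog : ∑ j, Real.logb 2 |a j| = Real.logb 2 c := by
    rw [hc_def, Finset.abs_prod, ← Real.logb_prod]
    intro j _
    exact abs_ne_zero.2 (ha j)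
  rw [hterm1]
  have : ∑ j, ∫ y, fA y * Real.logb 2 |y j|
      = (∑ j, ∫ x, f x * Real.logb 2 |x j|) + Real.logb 2 c := by
    rw [← hsumlog, ← Finset.sum_add_distrib]
    exact Finset.sum_congr rfl fun j _ => hterm2 j
  rw [this]
  ring
end

section
/- Let p ≥ 1 be a natural number, let e be an integer, and let x be a real number with 2^{e+1}(1 − 2^{−p−1}) ≤ x < 2^{e+1}(1 + 2^{−p}). Define the exponent-boundary bin size Δ = 3 · 2^{e−p} and the smoothed bin size Δ_s(x) = (|x|/√2) · 2^{1−p}. Then (2√2/3)(1 − 2^{−p−1}) ≤ Δ_s(x)/Δ ≤ (2√2/3)(1 + 2^{−p}), and both of these bounds lie in the interval [1/√2, √2]; consequently |log₂(Δ_s(x)/Δ)| ≤ 1/2. -/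
/-!
Dividing out the common power of two, Δs / Δ = (2√2/3) · x / 2^(e+1). The hypotheses place
x / 2^(e+1) in [1 - 2^(-p-1), 1 + 2^(-p)] ⊆ [3/4, 3/2] (this is where p ≥ 1 enters), and the
factor 2√2/3 maps [3/4, 3/2] onto [1/√2, √2] = [2^(-1/2), 2^(1/2)], on which |log₂| ≤ 1/2.
-/

open Real

lemma smoothed_bin_div_boundary_bin_eq (x : ℝ) (e p : ℤ) :
    (|x| / √2 * (2:ℝ) ^ (1 - p)) / (3 * (2:ℝ) ^ (e - p)) =
      2 * √2 / 3 * (|x| / (2:ℝ) ^ (e + 1)) := by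
  have hpow : (2:ℝ) ^ (1 - p) = (2:ℝ) ^ (e - p) * 2 ^ (2:ℤ) / (2:ℝ) ^ (e + 1) := by
    rw [← zpow_add₀ two_ne_zero, ← zpow_sub₀ two_ne_zero]
    ring_nf
  rw [hpow]
  field_simp
  rw [sq_sqrt zero_le_two]

lemma two_sqrt_two_div_three_mul_mem_Icc {c : ℝ} (hc₀ : 3 / 4 ≤ c) (hc₁ : c ≤ 3 / 2) :
    2 * √2 / 3 * c ∈ Set.Icc (1 / √2) √2 := by
  have hs : 0 < √2 := by positivity
  have hsq : √2 * √2 = 2 := mul_self_sqrt zero_le_two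
  constructor
  · rw [div_le_iff₀ hs]
    nlinarith
  · nlinarith

lemma abs_logb_two_le_half_of_mem_Icc {y : ℝ} (hy : y ∈ Set.Icc (1 / √2) √2) :
    |logb 2 y| ≤ 1 / 2 := by
  have hy₀ : 0 < y := lt_of_lt_of_le (by positivity) hy.1
  rw [abs_le, le_logb_iff_rpow_le one_lt_two hy₀, logb_le_iff_le_rpow one_lt_two hy₀,
    rpow_neg zero_le_two, ← sqrt_eq_rpow, ← one_div]
  exact hy

lemma two_zpow_neg_le_half {p : ℕ} (hp : 1 ≤ p) : (2:ℝ) ^ (-(p:ℤ)) ≤ 1 / 2 :=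
  calc (2:ℝ) ^ (-(p:ℤ)) ≤ (2:ℝ) ^ (-1:ℤ) := zpow_le_zpow_right₀ one_le_two (by omega)
    _ = 1 / 2 := by norm_num

/-- Bin-size ratio bounds for the exponent-boundary bin. -/
theorem exponent_boundary_bin_ratio_bound
    (p : ℕ) (hp : 1 ≤ p) (e : ℤ) (x : ℝ)
    (hx1 : (2:ℝ) ^ (e + 1) * (1 - (2:ℝ) ^ (-(p:ℤ) - 1)) ≤ x)
    (hx2 : x < (2:ℝ) ^ (e + 1) * (1 + (2:ℝ) ^ (-(p:ℤ))))
    (Δ : ℝ) (hΔ : Δ = 3 * (2:ℝ) ^ (e - (p:ℤ)))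
    (Δs : ℝ) (hΔs : Δs = (|x| / Real.sqrt 2) * (2:ℝ) ^ (1 - (p:ℤ))) :
    ((2 * Real.sqrt 2 / 3) * (1 - (2:ℝ) ^ (-(p:ℤ) - 1)) ≤ Δs / Δ
      ∧ Δs / Δ ≤ (2 * Real.sqrt 2 / 3) * (1 + (2:ℝ) ^ (-(p:ℤ))))
    ∧ (1 / Real.sqrt 2 ≤ (2 * Real.sqrt 2 / 3) * (1 - (2:ℝ) ^ (-(p:ℤ) - 1))
      ∧ (2 * Real.sqrt 2 / 3) * (1 - (2:ℝ) ^ (-(p:ℤ) - 1)) ≤ Real.sqrt 2)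
    ∧ (1 / Real.sqrt 2 ≤ (2 * Real.sqrt 2 / 3) * (1 + (2:ℝ) ^ (-(p:ℤ)))
      ∧ (2 * Real.sqrt 2 / 3) * (1 + (2:ℝ) ^ (-(p:ℤ))) ≤ Real.sqrt 2)
    ∧ |Real.logb 2 (Δs / Δ)| ≤ 1 / 2 := by
  have hu₀ : (0:ℝ) < 2 ^ (-(p:ℤ)) := zpow_pos two_pos _
  have hu := two_zpow_neg_le_half hp
  have ht₀ : (0:ℝ) < 2 ^ (-(p:ℤ) - 1) := zpow_pos two_pos _
  have ht : (2:ℝ) ^ (-(p:ℤ) - 1) ≤ 1 / 4 := by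
    rw [zpow_sub_one₀ two_ne_zero]
    linarith
  have hE : (0:ℝ) < 2 ^ (e + 1) := zpow_pos two_pos _
  have hx : 0 ≤ x := le_trans (mul_nonneg hE.le (by linarith)) hx1
  have hratio : Δs / Δ = 2 * √2 / 3 * (x / 2 ^ (e + 1)) := by
    rw [hΔs, hΔ, smoothed_bin_div_boundary_bin_eq, abs_of_nonneg hx]
  have hc : 0 ≤ 2 * √2 / 3 := by positivity
  have hbounds : 2 * √2 / 3 * (1 - 2 ^ (-(p:ℤ) - 1)) ≤ Δs / Δ
      ∧ Δs / Δ ≤ 2 * √2 / 3 * (1 + 2 ^ (-(p:ℤ))) := by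
    rw [hratio]
    exact ⟨mul_le_mul_of_nonneg_left ((le_div_iff₀' hE).2 hx1) hc,
      mul_le_mul_of_nonneg_left ((div_le_iff₀' hE).2 hx2.le) hc⟩
  have hlower := two_sqrt_two_div_three_mul_mem_Icc (c := 1 - 2 ^ (-(p:ℤ) - 1))
    (by linarith) (by linarith)
  have hupper := two_sqrt_two_div_three_mul_mem_Icc (c := 1 + 2 ^ (-(p:ℤ)))
    (by linarith) (by linarith)
  exact ⟨hbounds, hlower, hupper,
    abs_logb_two_le_half_of_mem_Icc ⟨hlower.1.trans hbounds.1, hbounds.2.trans hupper.2⟩⟩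
end

section
/- Let σ > 0 and let f(x) = exp(−x²/(2σ²)) / (σ√(2π)) be the density of the centered Gaussian distribution N(0, σ²). Then the differential floating-point entropy satisfies −∫_ℝ f(x) log₂(|x| · f(x)) dx = 1/2 + (1/2)·log₂(2πe) + γ/(2 ln 2), where γ is the Euler–Mascheroni constant. In particular this value does not depend on σ. -/
/-!
Since `log (|x| f x) = log |x| - x² / (2σ²) - log (σ √(2π))`, the integral splits into the mass,
the second moment and the logarithmic moment `∫ f log |x|` of the Gaussian. Only the last is not
classical: the substitution `t = x² / (2σ²)` turns it into
`∫₀^∞ t^(-1/2) log t e^(-t) dt = Γ'(1/2) = -√π (γ + 2 log 2)`. The dependence on `σ` of this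
moment cancels against that of the normalising constant.
-/

open Real MeasureTheory Set

namespace Real

theorem hasDerivAt_Gamma_integral {s : ℝ} (hs : 0 < s) :
    HasDerivAt Gamma (∫ t in Ioi 0, t ^ (s - 1) * (log t * exp (-t))) s := by
  have hGamma : Complex.Gamma =ᶠ[nhds (s : ℂ)] Complex.GammaIntegral := by
    filter_upwards [(isOpen_lt continuous_const Complex.continuous_re).mem_nhds
      (by simpa using hs : (0 : ℝ) < (s : ℂ).re)] with z hz using Complex.Gamma_eq_integral hz
  have hcomplex := ((Complex.hasDerivAt_GammaIntegral (by simpa using hs)).congr_of_eventuallyEq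
    hGamma).real_of_complex
  have hreal : (∫ t in Ioi (0 : ℝ), (t : ℂ) ^ ((s : ℂ) - 1) * (log t * exp (-t)))
      = ((∫ t in Ioi (0 : ℝ), t ^ (s - 1) * (log t * exp (-t)) : ℝ) : ℂ) := by
    rw [← integral_complex_ofReal]
    refine setIntegral_congr_fun measurableSet_Ioi fun t ht => ?_
    rw [← Complex.ofReal_one, ← Complex.ofReal_sub, ← Complex.ofReal_cpow (le_of_lt ht)]
    push_cast
    rfl
  rwa [hreal, Complex.ofReal_re] at hcomplex

theorem integral_rpow_neg_half_mul_log_mul_exp_neg :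
    ∫ t in Ioi 0, t ^ (-(1 / 2) : ℝ) * (log t * exp (-t))
      = -√π * (eulerMascheroniConstant + 2 * log 2) := by
  have h := hasDerivAt_Gamma_integral one_half_pos
  rw [show (1 / 2 : ℝ) - 1 = -(1 / 2) by norm_num] at h
  exact h.unique hasDerivAt_Gamma_one_half

end Real

theorem integral_comp_mul_sq_Ioi {E : Type*} [NormedAddCommGroup E] [NormedSpace ℝ E]
    (g : ℝ → E) {b : ℝ} (hb : 0 < b) :
    ∫ x in Ioi 0, g (b * x ^ 2) = (2 * √b)⁻¹ • ∫ t in Ioi 0, t ^ (-(1 / 2) : ℝ) • g t := by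
  have hsq : ∫ t in Ioi 0, t ^ (-(1 / 2) : ℝ) • g t = (2 : ℝ) • ∫ x in Ioi 0, g (x ^ 2) := by
    rw [← integral_comp_rpow_Ioi_of_pos two_pos, ← integral_smul]
    refine setIntegral_congr_fun measurableSet_Ioi fun x hx => ?_
    have hx : 0 < x := hx
    rw [smul_smul, ← rpow_mul hx.le, rpow_two]
    congr 1
    rw [mul_assoc, ← rpow_add hx]
    norm_num
  have hscale := integral_comp_mul_left_Ioi (fun y => g (y ^ 2)) 0 (sqrt_pos.2 hb)
  simp only [mul_pow, sq_sqrt hb.le, mul_zero] at hscale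
  rw [hscale, hsq, smul_smul, mul_inv, mul_comm (2 : ℝ)⁻¹, mul_assoc,
    inv_mul_cancel₀ two_ne_zero, mul_one]

section Gaussian

variable {b : ℝ}

theorem integral_sq_mul_exp_neg_mul_sq_Ioi (hb : 0 < b) :
    ∫ x in Ioi 0, x ^ 2 * exp (-b * x ^ 2) = √(π / b) / (4 * b) := by
  have h := integral_rpow_mul_exp_neg_mul_rpow two_pos (by norm_num : (-1 : ℝ) < 2) hb
  norm_num only [rpow_two] at h
  rw [h, show -(3 / 2 : ℝ) = -1 + -(1 / 2) by norm_num, rpow_add hb, rpow_neg_one,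
    rpow_neg hb.le, ← sqrt_eq_rpow, show (3 / 2 : ℝ) = 1 / 2 + 1 by norm_num,
    Gamma_add_one one_half_pos.ne', Gamma_one_half_eq, sqrt_div' _ hb.le]
  field_simp
  norm_num

theorem integral_log_mul_sq_mul_exp_neg_mul_sq_Ioi (hb : 0 < b) :
    ∫ x in Ioi 0, log (b * x ^ 2) * exp (-b * x ^ 2)
      = -√(π / b) * (eulerMascheroniConstant + 2 * log 2) / 2 := by
  simp_rw [neg_mul b]
  rw [integral_comp_mul_sq_Ioi (fun t => log t * exp (-t)) hb]
  simp only [smul_eq_mul]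
  rw [integral_rpow_neg_half_mul_log_mul_exp_neg, sqrt_div' _ hb.le]
  field_simp

theorem integrableOn_log_mul_sq_mul_exp_neg_mul_sq_Ioi (hb : 0 < b) :
    IntegrableOn (fun x => log (b * x ^ 2) * exp (-b * x ^ 2)) (Ioi 0) := by
  refine Integrable.of_integral_ne_zero ?_
  rw [integral_log_mul_sq_mul_exp_neg_mul_sq_Ioi hb]
  have := one_half_lt_eulerMascheroniConstant
  have : 0 < log 2 := log_pos one_lt_two
  have : 0 < √(π / b) := sqrt_pos.2 (by positivity)
  nlinarith

theorem integrableOn_exp_neg_mul_sq_mul_log_Ioi (hb : 0 < b) :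
    IntegrableOn (fun x => exp (-b * x ^ 2) * log x) (Ioi 0) := by
  refine IntegrableOn.congr_fun ((integrableOn_log_mul_sq_mul_exp_neg_mul_sq_Ioi hb).sub
    ((integrable_exp_neg_mul_sq hb).integrableOn.const_mul (log b)) |>.div_const 2)
    (fun x hx => ?_) measurableSet_Ioi
  rw [Pi.sub_apply, log_mul hb.ne' (pow_ne_zero 2 (ne_of_gt hx)), log_pow]
  push_cast
  ring

theorem integral_exp_neg_mul_sq_mul_log_Ioi (hb : 0 < b) :
    ∫ x in Ioi 0, exp (-b * x ^ 2) * log x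
      = -√(π / b) * (eulerMascheroniConstant + 2 * log 2 + log b) / 4 := by
  calc ∫ x in Ioi 0, exp (-b * x ^ 2) * log x
      = ∫ x in Ioi 0, (log (b * x ^ 2) * exp (-b * x ^ 2) - log b * exp (-b * x ^ 2)) / 2 := by
        refine setIntegral_congr_fun measurableSet_Ioi fun x hx => ?_
        rw [log_mul hb.ne' (pow_ne_zero 2 (ne_of_gt hx)), log_pow]
        push_cast
        ring
    _ = _ := by
        rw [integral_div, integral_sub (integrableOn_log_mul_sq_mul_exp_neg_mul_sq_Ioi hb)
          ((integrable_exp_neg_mul_sq hb).integrableOn.const_mul (log b)), integral_const_mul,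
          integral_log_mul_sq_mul_exp_neg_mul_sq_Ioi hb, integral_gaussian_Ioi]
        ring

theorem integral_gaussian_mul_log_abs_mul_gaussian (hb : 0 < b) :
    ∫ x, exp (-b * x ^ 2) / √(π / b) * log (|x| * (exp (-b * x ^ 2) / √(π / b)))
      = -(eulerMascheroniConstant + 1 + log (4 * π)) / 2 := by
  set c := √(π / b) with hc_def
  have hc : 0 < c := sqrt_pos.2 (by positivity)
  have hsq : IntegrableOn (fun x => x ^ 2 * exp (-b * x ^ 2)) (Ioi 0) := by
    simpa only [rpow_two] using integrableOn_rpow_mul_exp_neg_mul_sq hb (s := 2) (by norm_num)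
  have hexp := (integrable_exp_neg_mul_sq hb).integrableOn (s := Ioi 0)
  have hlog := integrableOn_exp_neg_mul_sq_mul_log_Ioi hb
  have hlogc : log c = (log π - log b) / 2 := by
    rw [hc_def, log_sqrt (by positivity), log_div pi_ne_zero hb.ne']
  have h4π : log (4 * π) = 2 * log 2 + log π := by
    rw [log_mul (by norm_num) pi_ne_zero, show (4 : ℝ) = 2 ^ 2 by norm_num, log_pow]
    push_cast
    ring
  calc ∫ x, exp (-b * x ^ 2) / c * log (|x| * (exp (-b * x ^ 2) / c))
      = 2 * ∫ y in Ioi 0, exp (-b * y ^ 2) / c * log (y * (exp (-b * y ^ 2) / c)) := by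
        simp_rw [← integral_comp_abs, sq_abs]
    _ = 2 * ∫ y in Ioi 0, (exp (-b * y ^ 2) * log y - b * (y ^ 2 * exp (-b * y ^ 2))
          - log c * exp (-b * y ^ 2)) / c := by
        congr 1
        refine setIntegral_congr_fun measurableSet_Ioi fun y hy => ?_
        rw [log_mul (ne_of_gt hy) (by positivity), log_div (by positivity) hc.ne', log_exp]
        ring
    _ = -(eulerMascheroniConstant + 1 + log (4 * π)) / 2 := by
        have hdiff : IntegrableOn (fun y => exp (-b * y ^ 2) * log y
            - b * (y ^ 2 * exp (-b * y ^ 2))) (Ioi 0) := hlog.sub (hsq.const_mul b)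
        rw [integral_div, integral_sub hdiff (hexp.const_mul _),
          integral_sub hlog (hsq.const_mul b), integral_const_mul, integral_const_mul,
          integral_exp_neg_mul_sq_mul_log_Ioi hb, integral_sq_mul_exp_neg_mul_sq_Ioi hb,
          integral_gaussian_Ioi, ← hc_def, hlogc, h4π]
        field_simp
        ring

end Gaussian

/-- Differential floating-point entropy of the centered Gaussian. -/
theorem fp_entropy_gaussian
    (σ : ℝ) (hσ : 0 < σ)
    (f : ℝ → ℝ)
    (hf : ∀ x, f x = Real.exp (-x ^ 2 / (2 * σ ^ 2)) / (σ * Real.sqrt (2 * π))) :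
    -∫ x, f x * Real.logb 2 (|x| * f x)
      = 1 / 2 + (1 / 2) * Real.logb 2 (2 * π * Real.exp 1)
        + Real.eulerMascheroniConstant / (2 * Real.log 2) := by
  have hb : 0 < (2 * σ ^ 2)⁻¹ := by positivity
  have hf_gaussian : ∀ x, f x = exp (-(2 * σ ^ 2)⁻¹ * x ^ 2) / √(π / (2 * σ ^ 2)⁻¹) := by
    intro x
    rw [hf, div_inv_eq_mul, show π * (2 * σ ^ 2) = σ ^ 2 * (2 * π) by ring,
      sqrt_mul (sq_nonneg σ), sqrt_sq hσ.le]
    congr 2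
    ring
  simp_rw [logb, ← mul_div_assoc, integral_div, hf_gaussian,
    integral_gaussian_mul_log_abs_mul_gaussian hb]
  rw [log_mul (by positivity) (exp_ne_zero 1), log_exp, log_mul two_ne_zero pi_ne_zero,
    log_mul (by norm_num) pi_ne_zero, show (4 : ℝ) = 2 ^ 2 by norm_num, log_pow]
  have : log 2 ≠ 0 := (log_pos one_lt_two).ne'
  field_simp
  push_cast
  ring
end

section
/- Let a < b be real numbers and let f(x) = 1/(b−a) for a ≤ x ≤ b and f(x) = 0 otherwise, the density of the uniform distribution on [a, b]. Then −∫_ℝ f(x) log₂(|x| · f(x)) dx = −1/2 + log₂(√2 · e · (b−a)) + (a·log₂|a| − b·log₂|b|)/(b−a), with the convention 0·log₂ 0 = 0. In particular, for a = −c and b = c with c > 0, this value equals 1 + log₂ e, independent of c. -/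
/-!
On `[a, b]` the density is the constant `(b - a)⁻¹`, so the integral is
`(b - a)⁻¹ ∫ₐᵇ logb 2 (|x| (b - a)⁻¹) dx`, which `∫ log |x| = x log x - x` evaluates in closed form.
For `[-c, c]` the endpoint terms `-c log c - c log c` cancel against
`log (b - a) = log 2 + log c`.
-/

open Real MeasureTheory

theorem integral_ite_Icc_eq_intervalIntegral {a b : ℝ} (hab : a ≤ b) (g : ℝ → ℝ) :
    ∫ x, (if a ≤ x ∧ x ≤ b then g x else 0) = ∫ x in a..b, g x := by
  rw [intervalIntegral.integral_of_le hab, ← integral_Icc_eq_integral_Ioc,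
    ← integral_indicator measurableSet_Icc]
  congr 1 with x
  simp only [Set.indicator, Set.mem_Icc]

theorem integral_logb_abs_mul (β a b : ℝ) {c : ℝ} (hc : c ≠ 0) :
    ∫ x in a..b, logb β (|x| * c)
      = (b * log b - a * log a - b + a + (b - a) * log c) / log β := by
  have h_ae : ∀ᵐ x : ℝ, x ≠ 0 := by simp [ae_iff, measure_singleton]
  calc ∫ x in a..b, logb β (|x| * c)
      = ∫ x in a..b, (log x / log β + log c / log β) := by
        refine intervalIntegral.integral_congr_ae (h_ae.mono fun x hx _ => ?_)
        rw [logb, log_mul (abs_ne_zero.2 hx) hc, log_abs, add_div]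
    _ = _ := by
        rw [intervalIntegral.integral_add (intervalIntegral.intervalIntegrable_log'.div_const _)
          intervalIntegrable_const, intervalIntegral.integral_div, integral_log,
          intervalIntegral.integral_const, smul_eq_mul]
        ring

theorem neg_integral_uniform_mul_logb_abs_mul {a b : ℝ} (hab : a < b) :
    -((b - a)⁻¹ * ∫ x in a..b, logb 2 (|x| * (b - a)⁻¹))
      = -(1 / 2) + logb 2 (√2 * exp 1 * (b - a))
        + (a * logb 2 |a| - b * logb 2 |b|) / (b - a) := by
  have hba : b - a ≠ 0 := (sub_pos.2 hab).ne'
  have hlog2 : log 2 ≠ 0 := (log_pos one_lt_two).ne'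
  rw [integral_logb_abs_mul 2 a b (inv_ne_zero hba)]
  simp only [logb]
  rw [log_mul (by positivity) hba, log_mul (by positivity) (exp_ne_zero 1),
    log_sqrt zero_le_two, log_exp, log_inv, log_abs, log_abs]
  field_simp
  ring

/-- Differential floating-point entropy of the uniform
distribution on `[a, b]`. -/
theorem fp_entropy_uniform
    (a b : ℝ) (hab : a < b)
    (f : ℝ → ℝ)
    (hf : ∀ x, f x = if a ≤ x ∧ x ≤ b then 1 / (b - a) else 0) :
    (-∫ x, f x * Real.logb 2 (|x| * f x)
      = -(1 / 2) + Real.logb 2 (Real.sqrt 2 * Real.exp 1 * (b - a))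
        + (a * Real.logb 2 |a| - b * Real.logb 2 |b|) / (b - a))
    ∧ (∀ c : ℝ, 0 < c → a = -c → b = c →
      -∫ x, f x * Real.logb 2 (|x| * f x) = 1 + Real.logb 2 (Real.exp 1)) := by
  have h_integrand : ∀ x, f x * logb 2 (|x| * f x)
      = if a ≤ x ∧ x ≤ b then (b - a)⁻¹ * logb 2 (|x| * (b - a)⁻¹) else 0 := by
    intro x
    rw [hf x]
    split_ifs <;> simp
  have h_entropy : -∫ x, f x * logb 2 (|x| * f x)
      = -(1 / 2) + logb 2 (√2 * exp 1 * (b - a))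
        + (a * logb 2 |a| - b * logb 2 |b|) / (b - a) := by
    simp_rw [h_integrand, integral_ite_Icc_eq_intervalIntegral hab.le,
      intervalIntegral.integral_const_mul]
    exact neg_integral_uniform_mul_logb_abs_mul hab
  refine ⟨h_entropy, fun c hc ha hb => ?_⟩
  rw [h_entropy, ha, hb, sub_neg_eq_add, ← two_mul, abs_neg, abs_of_pos hc]
  simp only [logb]
  rw [log_mul (by positivity : √2 * exp 1 ≠ 0) (by positivity : 2 * c ≠ 0),
    log_mul two_ne_zero hc.ne', log_mul (by positivity) (exp_ne_zero 1),
    log_sqrt zero_le_two, log_exp]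
  field_simp
  ring
end

section
/- Let α > 0 and θ > 0, and let f(x) = x^{α−1} e^{−x/θ} / (Γ(α) θ^α) for x > 0 and f(x) = 0 otherwise, the density of the Gamma distribution with shape α and scale θ. Then −∫_ℝ f(x) log₂(|x| · f(x)) dx = α · log₂(e) · (1 − ψ(α)) + log₂ Γ(α), where Γ is the Gamma function and ψ is the digamma function. In particular this value does not depend on the scale parameter θ. -/
/-!
Writing `f` as `x ↦ θ⁻¹ g (θ⁻¹ x)` with `g` the Gamma density of scale `1`, the substitution
`u = θ⁻¹ x` leaves `|x| f(x) = |u| g(u)` unchanged, so the floating-point entropy does not depend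
on `θ`. For `g`, `log (u g(u)) = α log u - u - log Γ(α)`, and the three moments
`∫ g = 1`, `∫ u g(u) du = α` and `∫ log u · g(u) du = ψ(α)` give the value; the last one is
`Γ'(α) / Γ(α)`, the derivative of the Gamma integral being the Mellin transform of
`log t · e^{-t}`.
-/

open Real MeasureTheory

/-- The digamma function `ψ(x) = d/dx log Γ(x)`. -/
noncomputable def digamma (x : ℝ) : ℝ := deriv (fun t => Real.log (Real.Gamma t)) x

open Set

open Filter Asymptotics Topology in
theorem Real.integrableOn_rpow_mul_log_mul_exp_neg {s : ℝ} (hs : 0 < s) :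
    IntegrableOn (fun t : ℝ => t ^ (s - 1) * (log t * exp (-t))) (Ioi 0) := by
  have hmellin := (mellin_hasDerivAt_of_isBigO_rpow (E := ℂ) (a := s + 1) (b := 0)
      (f := fun t : ℝ => ((exp (-t) : ℝ) : ℂ)) (s := (s : ℂ))
      ?_ ?_ (by simp) ?_ (by simpa using hs)).1
  · have hcomplex : IntegrableOn
        (fun t : ℝ => (t : ℂ) ^ ((s : ℂ) - 1) • (log t • ((exp (-t) : ℝ) : ℂ))) (Ioi 0) := by
      simpa [MellinConvergent, mul_comm] using hmellin
    refine hcomplex.re.congr ?_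
    filter_upwards [ae_restrict_mem measurableSet_Ioi] with t ht
    rw [show (s : ℂ) - 1 = ((s - 1 : ℝ) : ℂ) by push_cast; ring, ← Complex.ofReal_cpow ht.le]
    simp only [Complex.real_smul, smul_eq_mul, ← Complex.ofReal_mul, RCLike.re_to_complex,
      Complex.ofReal_re]
  · exact (Complex.continuous_ofReal.comp (continuous_exp.comp continuous_neg)).continuousOn
      |>.locallyIntegrableOn measurableSet_Ioi
  · rw [← isBigO_norm_left]
    simp_rw [Complex.norm_real, isBigO_norm_left]
    simpa only [neg_one_mul] using (isLittleO_exp_neg_mul_rpow_atTop zero_lt_one _).isBigO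
  · simp_rw [neg_zero, rpow_zero]
    refine isBigO_const_of_tendsto (?_ : Tendsto _ _ (𝓝 (1 : ℂ))) one_ne_zero
    rw [(by simp : (1 : ℂ) = exp (-0))]
    exact (Complex.continuous_ofReal.comp (continuous_exp.comp continuous_neg)).continuousWithinAt

open Topology in
theorem Real.hasDerivAt_Gamma_of_pos {s : ℝ} (hs : 0 < s) :
    HasDerivAt Gamma (∫ t in Ioi 0, t ^ (s - 1) * (log t * exp (-t))) s := by
  have hcomplex : HasDerivAt Complex.Gamma
      (∫ t : ℝ in Ioi 0, (t : ℂ) ^ ((s : ℂ) - 1) * (log t * exp (-t))) (s : ℂ) := by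
    have hre : {z : ℂ | 0 < z.re} ∈ 𝓝 (s : ℂ) :=
      (isOpen_lt continuous_const Complex.continuous_re).mem_nhds (by simpa using hs)
    refine (Complex.hasDerivAt_GammaIntegral (by simpa using hs)).congr_of_eventuallyEq ?_
    filter_upwards [hre] with z hz using Complex.Gamma_eq_integral hz
  have hreal : ∫ t : ℝ in Ioi 0, (t : ℂ) ^ ((s : ℂ) - 1) * (log t * exp (-t))
      = ((∫ t in Ioi 0, t ^ (s - 1) * (log t * exp (-t)) : ℝ) : ℂ) := by
    refine (setIntegral_congr_fun measurableSet_Ioi fun t ht => ?_).trans integral_ofReal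
    rw [show (s : ℂ) - 1 = ((s - 1 : ℝ) : ℂ) by push_cast; ring,
      ← Complex.ofReal_cpow (le_of_lt ht)]
    norm_cast
  have hderiv := hcomplex.real_of_complex
  rw [hreal] at hderiv
  simpa [Complex.Gamma_ofReal] using hderiv

theorem integral_rpow_mul_log_mul_exp_neg {s : ℝ} (hs : 0 < s) :
    ∫ t in Ioi 0, t ^ (s - 1) * (log t * exp (-t)) = Gamma s * digamma s := by
  have hlog := (hasDerivAt_Gamma_of_pos hs).log (Gamma_pos_of_pos hs).ne'
  rw [digamma, hlog.deriv]
  field_simp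

noncomputable def fpEntropy (f : ℝ → ℝ) : ℝ := -∫ x, f x * logb 2 (|x| * f x)

theorem fpEntropy_comp_inv_mul (f : ℝ → ℝ) {θ : ℝ} (hθ : 0 < θ) :
    fpEntropy (fun x => θ⁻¹ * f (θ⁻¹ * x)) = fpEntropy f := by
  have hscale : ∀ x, θ⁻¹ * f (θ⁻¹ * x) * logb 2 (|x| * (θ⁻¹ * f (θ⁻¹ * x)))
      = θ⁻¹ * (f (θ⁻¹ * x) * logb 2 (|θ⁻¹ * x| * f (θ⁻¹ * x))) := fun x => by
    rw [abs_mul, abs_of_pos (inv_pos.2 hθ)]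
    ring_nf
  simp only [fpEntropy, hscale, integral_const_mul,
    Measure.integral_comp_inv_mul_left (fun y => f y * logb 2 (|y| * f y)), smul_eq_mul,
    abs_of_pos hθ, inv_mul_cancel_left₀ hθ.ne']

theorem fpEntropy_eq_neg_integral_mul_log_div_log_two (f : ℝ → ℝ) :
    fpEntropy f = -(∫ x, f x * log (|x| * f x)) / log 2 := by
  simp only [fpEntropy, logb, ← mul_div_assoc, integral_div, neg_div]

noncomputable def gammaDensity (α θ x : ℝ) : ℝ :=
  if 0 < x then x ^ (α - 1) * exp (-x / θ) / (Gamma α * θ ^ α) else 0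

theorem gammaDensity_eq_inv_mul_gammaDensity_one (α : ℝ) {θ : ℝ} (hθ : 0 < θ) (x : ℝ) :
    gammaDensity α θ x = θ⁻¹ * gammaDensity α 1 (θ⁻¹ * x) := by
  have hθinv : 0 < θ⁻¹ := inv_pos.2 hθ
  simp only [gammaDensity, mul_pos_iff_of_pos_left hθinv, one_rpow, div_one, mul_one]
  split_ifs with hx
  · rw [mul_rpow hθinv.le hx.le, inv_rpow hθ.le, rpow_sub_one hθ.ne', neg_div, div_eq_inv_mul x]
    field_simp
  · simp

/- The three terms are the integrands of `Γ'(α)`, `Γ(α + 1)` and `Γ(α)`, in the shape of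
`Real.hasDerivAt_Gamma_of_pos` and `Real.Gamma_eq_integral`. -/
theorem gammaDensity_one_mul_log_eq {α u : ℝ} (hα : 0 < α) (hu : 0 < u) :
    gammaDensity α 1 u * log (|u| * gammaDensity α 1 u)
      = (Gamma α)⁻¹ * (α * (u ^ (α - 1) * (log u * exp (-u))) - exp (-u) * u ^ (α + 1 - 1)
          - log (Gamma α) * (exp (-u) * u ^ (α - 1))) := by
  have hΓ := Gamma_pos_of_pos hα
  have hdens : gammaDensity α 1 u = u ^ (α - 1) * exp (-u) / Gamma α := by
    simp [gammaDensity, hu]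
  have hlog : log (|u| * gammaDensity α 1 u) = α * log u - u - log (Gamma α) := by
    have : |u| * gammaDensity α 1 u = u ^ α * exp (-u) / Gamma α := by
      rw [hdens, abs_of_pos hu, rpow_sub_one hu.ne']
      field_simp
    rw [this, log_div (by positivity) hΓ.ne', log_mul (by positivity) (exp_pos _).ne',
      log_rpow hu, log_exp]
    ring
  rw [hlog, hdens, add_sub_cancel_right, rpow_sub_one hu.ne']
  field_simp

theorem integral_gammaDensity_one_mul_log {α : ℝ} (hα : 0 < α) :
    ∫ x, gammaDensity α 1 x * log (|x| * gammaDensity α 1 x)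
      = α * digamma α - α - log (Gamma α) := by
  have hzero : ∀ x ∉ Ioi (0 : ℝ), gammaDensity α 1 x * log (|x| * gammaDensity α 1 x) = 0 :=
    fun x (hx : ¬0 < x) => by rw [gammaDensity, if_neg hx, zero_mul]
  rw [← setIntegral_eq_integral_of_forall_compl_eq_zero hzero,
    setIntegral_congr_fun measurableSet_Ioi fun u hu => gammaDensity_one_mul_log_eq hα hu]
  have hα1 : 0 < α + 1 := by positivity
  have hlogMoment := (integrableOn_rpow_mul_log_mul_exp_neg hα).const_mul α
  have hmoment := GammaIntegral_convergent hα1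
  have hmoments : IntegrableOn
      (fun u => α * (u ^ (α - 1) * (log u * exp (-u))) - exp (-u) * u ^ (α + 1 - 1)) (Ioi 0) :=
    hlogMoment.sub hmoment
  rw [integral_const_mul, integral_sub hmoments ((GammaIntegral_convergent hα).const_mul _),
    integral_sub hlogMoment hmoment, integral_const_mul, integral_const_mul,
    integral_rpow_mul_log_mul_exp_neg hα, ← Gamma_eq_integral hα, ← Gamma_eq_integral hα1,
    Gamma_add_one hα.ne']
  field_simp

/-- Differential floating-point entropy of the Gamma distribution. -/
theorem fp_entropy_gamma
    (α θ : ℝ) (hα : 0 < α) (hθ : 0 < θ)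
    (f : ℝ → ℝ)
    (hf : ∀ x, f x = if 0 < x then
      x ^ (α - 1) * Real.exp (-x / θ) / (Real.Gamma α * θ ^ α) else 0) :
    -∫ x, f x * Real.logb 2 (|x| * f x)
      = α * Real.logb 2 (Real.exp 1) * (1 - digamma α)
        + Real.logb 2 (Real.Gamma α) := by
  have hf_scale : f = fun x => θ⁻¹ * gammaDensity α 1 (θ⁻¹ * x) :=
    funext fun x => (hf x).trans (gammaDensity_eq_inv_mul_gammaDensity_one α hθ x)
  change fpEntropy f = _
  rw [hf_scale, fpEntropy_comp_inv_mul _ hθ, fpEntropy_eq_neg_integral_mul_log_div_log_two,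
    integral_gammaDensity_one_mul_log hα, logb, logb, log_exp]
  field_simp
  ring
end

section
/- Let λ > 0 and k > 0, and let f(x) = (k/λ)·(x/λ)^{k−1}·exp(−(x/λ)^k) for x > 0 and f(x) = 0 otherwise, the density of the Weibull distribution with scale λ and shape k. Then −∫_ℝ f(x) log₂(|x| · f(x)) dx = (1 + γ)/ln 2 − log₂ k, where γ is the Euler–Mascheroni constant. In particular this value does not depend on the scale parameter λ. -/
/-!
Substituting `t = (x / λ) ^ k` turns `f x dx` into `exp (-t) dt` and `|x| f x` into
`k t exp (-t)`, so the entropy integral becomes `∫₀^∞ exp (-t) log (k t exp (-t)) dt`,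
independent of `λ`. Its `log t` part is `Γ'(1) = -γ`, and the other parts are
elementary Gamma integrals.
-/

open Real MeasureTheory Set Topology

lemma integral_log_mul_exp_neg_Ioi :
    ∫ t in Ioi (0 : ℝ), log t * exp (-t) = -eulerMascheroniConstant := by
  have hΓ : Complex.Gamma =ᶠ[𝓝 1] Complex.GammaIntegral := by
    filter_upwards [(isOpen_lt continuous_const Complex.continuous_re).mem_nhds
      (by simp : (0 : ℝ) < (1 : ℂ).re)] with s hs
    exact Complex.Gamma_eq_integral hs
  have h := ((Complex.hasDerivAt_GammaIntegral (by simp)).congr_of_eventuallyEq hΓ).unique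
    Complex.hasDerivAt_Gamma_one
  simp only [sub_self, Complex.cpow_zero, one_mul, ← Complex.ofReal_mul] at h
  exact_mod_cast h

lemma integral_mul_exp_neg_Ioi : ∫ t in Ioi (0 : ℝ), t * exp (-t) = 1 := by
  have h := Real.Gamma_eq_integral two_pos
  rw [Real.Gamma_two, show (2 : ℝ) - 1 = 1 by norm_num] at h
  simpa [mul_comm] using h.symm

lemma integral_exp_neg_mul_log_mul_exp_neg_Ioi {c : ℝ} (hc : 0 < c) :
    ∫ t in Ioi (0 : ℝ), exp (-t) * log (c * t * exp (-t))
      = log c - eulerMascheroniConstant - 1 := by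
  -- integrability of the first two comes for free: their integrals are nonzero
  have hlog : IntegrableOn (fun t : ℝ => log t * exp (-t)) (Ioi 0) :=
    .of_integral_ne_zero <| by
      rw [integral_log_mul_exp_neg_Ioi]; linarith [one_half_lt_eulerMascheroniConstant]
  have hid : IntegrableOn (fun t : ℝ => t * exp (-t)) (Ioi 0) :=
    .of_integral_ne_zero <| by rw [integral_mul_exp_neg_Ioi]; exact one_ne_zero
  have hexp : IntegrableOn (fun t : ℝ => exp (-t)) (Ioi 0) := by
    simpa using exp_neg_integrableOn_Ioi 0 one_pos
  have hexpand : EqOn (fun t => exp (-t) * log (c * t * exp (-t)))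
      (fun t => (log c * exp (-t) + log t * exp (-t)) - t * exp (-t)) (Ioi 0) := by
    intro t (ht : 0 < t)
    simp only
    rw [log_mul (by positivity) (exp_pos _).ne', log_mul hc.ne' ht.ne', log_exp]
    ring
  rw [setIntegral_congr_fun measurableSet_Ioi hexpand, integral_sub _ hid, integral_add _ hlog,
    integral_const_mul, integral_exp_neg_Ioi_zero, integral_log_mul_exp_neg_Ioi,
    integral_mul_exp_neg_Ioi]
  · ring
  · exact hexp.const_mul _
  · exact (hexp.const_mul _).add hlog

lemma integral_weibull_smul_comp {E : Type*} [NormedAddCommGroup E] [NormedSpace ℝ E]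
    {lam k : ℝ} (hlam : 0 < lam) (hk : 0 < k) (g : ℝ → E) :
    ∫ x in Ioi 0, ((k / lam) * (x / lam) ^ (k - 1)) • g ((x / lam) ^ k)
      = ∫ t in Ioi 0, g t := by
  set h : ℝ → E := fun y => (k * y ^ (k - 1)) • g (y ^ k)
  calc ∫ x in Ioi 0, ((k / lam) * (x / lam) ^ (k - 1)) • g ((x / lam) ^ k)
      = lam⁻¹ • ∫ x in Ioi 0, h (lam⁻¹ * x) := by
        rw [← integral_smul]
        congr with x
        simp only [h, smul_smul, div_eq_inv_mul]
        ring_nf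
    _ = ∫ y in Ioi 0, h y := by rw [integral_comp_mul_left_Ioi' h 0 (inv_pos.2 hlam), mul_zero]
    _ = ∫ t in Ioi 0, g t := integral_comp_rpow_Ioi_of_pos hk

lemma self_mul_div_mul_div_rpow_sub_one {lam k x : ℝ} (hlam : lam ≠ 0) (hx : x ≠ 0) :
    x * (k / lam * (x / lam) ^ (k - 1)) = k * (x / lam) ^ k := by
  rw [rpow_sub_one (div_ne_zero hx hlam)]
  field_simp

/-- Differential floating-point entropy of the Weibull
distribution. -/
theorem fp_entropy_weibull
    (lam k : ℝ) (hlam : 0 < lam) (hk : 0 < k)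
    (f : ℝ → ℝ)
    (hf : ∀ x, f x = if 0 < x then
      (k / lam) * (x / lam) ^ (k - 1) * Real.exp (-(x / lam) ^ k) else 0) :
    -∫ x, f x * Real.logb 2 (|x| * f x)
      = (1 + Real.eulerMascheroniConstant) / Real.log 2 - Real.logb 2 k := by
  set G : ℝ → ℝ := fun t => exp (-t) * log (k * t * exp (-t))
  have hsupp : ∀ x ∉ Ioi 0, f x * log (|x| * f x) = 0 := fun x (hx : ¬0 < x) => by
    rw [hf, if_neg hx, zero_mul]
  have hsubst : EqOn (fun x => f x * log (|x| * f x))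
      (fun x => ((k / lam) * (x / lam) ^ (k - 1)) • G ((x / lam) ^ k)) (Ioi 0) := by
    intro x (hx : 0 < x)
    simp only [G, hf, if_pos hx, abs_of_pos hx, smul_eq_mul]
    rw [← mul_assoc x, self_mul_div_mul_div_rpow_sub_one hlam.ne' hx.ne']
    ring
  have hlog : ∫ x, f x * log (|x| * f x) = log k - eulerMascheroniConstant - 1 := by
    rw [← setIntegral_eq_integral_of_forall_compl_eq_zero hsupp,
      setIntegral_congr_fun measurableSet_Ioi hsubst, integral_weibull_smul_comp hlam hk,
      integral_exp_neg_mul_log_mul_exp_neg_Ioi hk]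
  simp_rw [logb, ← mul_div_assoc]
  rw [integral_div, hlog]
  ring
end

section
/- Let x_m > 0 and α > 0, and let f(x) = α · x_m^α / x^{α+1} for x ≥ x_m and f(x) = 0 otherwise, the density of the Pareto distribution with scale x_m and shape α. Then −∫_ℝ f(x) log₂(|x| · f(x)) dx = log₂(e/α). In particular this value does not depend on the scale parameter x_m. -/
/-!
On `[t, ∞)` the Pareto density `f = paretoPDFReal t r` satisfies `x f(x) = r (t/x)^r`, so
`log (x f(x)) = log r - r log (x/t)` and the entropy reduces to the normalisation `∫ f = 1`
and the log-moment `∫ f(x) log (x/t) = 1/r`.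
Both integrands are nonnegative with antiderivatives `-(t/x)^r` and `-(t/x)^r (log (x/t) + 1/r)`,
which vanish at infinity; this yields integrability and the values at once.
Hence `-∫ f log₂ (|x| f) = (1 - log r) / log 2 = log₂ (e/r)`.
-/

open Real MeasureTheory Set Filter Topology ProbabilityTheory

namespace ProbabilityTheory

variable {t r x : ℝ}

lemma paretoPDFReal_of_le (hx : t ≤ x) : paretoPDFReal t r x = r * t ^ r * x ^ (-(r + 1)) :=
  if_pos hx

lemma log_abs_mul_paretoPDFReal (ht : 0 < t) (hr : r ≠ 0) (hx : t ≤ x) :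
    log (|x| * paretoPDFReal t r x) = log r - r * log (x / t) := by
  have hx0 : 0 < x := ht.trans_le hx
  have hxpdf : x * (r * t ^ r * x ^ (-(r + 1))) = r * t ^ r * x ^ (-r) := by
    rw [rpow_neg hx0.le, rpow_neg hx0.le, rpow_add_one hx0.ne']
    field_simp
  rw [paretoPDFReal_of_le hx, abs_of_pos hx0, hxpdf, log_mul (by positivity) (by positivity),
    log_mul hr (by positivity), log_rpow ht, log_rpow hx0, log_div hx0.ne' ht.ne']
  ring

lemma hasDerivAt_neg_mul_rpow_neg (ht : 0 < t) (hx : t ≤ x) :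
    HasDerivAt (fun y ↦ -(t ^ r * y ^ (-r))) (paretoPDFReal t r x) x := by
  have hx0 : 0 < x := ht.trans_le hx
  refine ((hasDerivAt_rpow_const (Or.inl hx0.ne')).const_mul (t ^ r)).neg.congr_deriv ?_
  rw [paretoPDFReal_of_le hx, show -r - 1 = -(r + 1) by ring]
  ring

lemma hasDerivAt_neg_mul_rpow_neg_mul_log (ht : 0 < t) (hr : r ≠ 0) (hx : t ≤ x) :
    HasDerivAt (fun y ↦ -(t ^ r * y ^ (-r)) * (log (y / t) + r⁻¹))
      (paretoPDFReal t r x * log (x / t)) x := by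
  have hx0 : 0 < x := ht.trans_le hx
  have hlog : HasDerivAt (fun y ↦ log (y / t) + r⁻¹) x⁻¹ x := by
    refine ((((hasDerivAt_id x).div_const t).log (by positivity)).add_const r⁻¹).congr_deriv ?_
    simp only [id]
    field_simp
  refine ((hasDerivAt_neg_mul_rpow_neg (r := r) ht hx).mul hlog).congr_deriv ?_
  rw [paretoPDFReal_of_le hx, rpow_neg hx0.le, rpow_neg hx0.le, rpow_add_one hx0.ne']
  field_simp
  ring

lemma tendsto_neg_mul_rpow_neg_atTop (hr : 0 < r) :
    Tendsto (fun y ↦ -(t ^ r * y ^ (-r))) atTop (𝓝 0) := by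
  simpa using ((tendsto_rpow_neg_atTop hr).const_mul (t ^ r)).neg

lemma tendsto_neg_mul_rpow_neg_mul_log_atTop (ht : 0 < t) (hr : 0 < r) :
    Tendsto (fun y ↦ -(t ^ r * y ^ (-r)) * (log (y / t) + r⁻¹)) atTop (𝓝 0) := by
  have hlog : Tendsto (fun y ↦ log y / y ^ r) atTop (𝓝 0) :=
    (isLittleO_log_rpow_atTop hr).tendsto_div_nhds_zero
  have h := ((hlog.sub ((tendsto_rpow_neg_atTop hr).const_mul (log t - r⁻¹))).const_mul
    (-t ^ r))
  rw [mul_zero, sub_zero, mul_zero] at h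
  refine h.congr' ?_
  filter_upwards [eventually_gt_atTop 0] with y hy
  rw [log_div hy.ne' ht.ne', rpow_neg hy.le]
  ring

lemma integrableOn_Ioi_paretoPDFReal (ht : 0 < t) (hr : 0 < r) :
    IntegrableOn (paretoPDFReal t r) (Ioi t) :=
  integrableOn_Ioi_deriv_of_nonneg' (fun _ hx ↦ hasDerivAt_neg_mul_rpow_neg ht hx)
    (fun _ _ ↦ paretoPDFReal_nonneg ht.le hr.le _) (tendsto_neg_mul_rpow_neg_atTop hr)

lemma integral_Ioi_paretoPDFReal (ht : 0 < t) (hr : 0 < r) :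
    ∫ x in Ioi t, paretoPDFReal t r x = 1 := by
  rw [integral_Ioi_of_hasDerivAt_of_nonneg' (fun _ hx ↦ hasDerivAt_neg_mul_rpow_neg ht hx)
    (fun _ _ ↦ paretoPDFReal_nonneg ht.le hr.le _) (tendsto_neg_mul_rpow_neg_atTop hr),
    ← rpow_add ht]
  simp

lemma paretoPDFReal_mul_log_div_nonneg (ht : 0 < t) (hr : 0 < r) (hx : t ≤ x) :
    0 ≤ paretoPDFReal t r x * log (x / t) :=
  mul_nonneg (paretoPDFReal_nonneg ht.le hr.le x) (log_nonneg ((one_le_div ht).2 hx))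

lemma integrableOn_Ioi_paretoPDFReal_mul_log_div (ht : 0 < t) (hr : 0 < r) :
    IntegrableOn (fun x ↦ paretoPDFReal t r x * log (x / t)) (Ioi t) :=
  integrableOn_Ioi_deriv_of_nonneg' (fun _ hx ↦ hasDerivAt_neg_mul_rpow_neg_mul_log ht hr.ne' hx)
    (fun _ hx ↦ paretoPDFReal_mul_log_div_nonneg ht hr (le_of_lt hx))
    (tendsto_neg_mul_rpow_neg_mul_log_atTop ht hr)

lemma integral_Ioi_paretoPDFReal_mul_log_div (ht : 0 < t) (hr : 0 < r) :
    ∫ x in Ioi t, paretoPDFReal t r x * log (x / t) = r⁻¹ := by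
  rw [integral_Ioi_of_hasDerivAt_of_nonneg'
    (fun _ hx ↦ hasDerivAt_neg_mul_rpow_neg_mul_log ht hr.ne' hx)
    (fun _ hx ↦ paretoPDFReal_mul_log_div_nonneg ht hr (le_of_lt hx))
    (tendsto_neg_mul_rpow_neg_mul_log_atTop ht hr), ← rpow_add ht]
  simp

lemma integral_paretoPDFReal_mul_log_abs_mul (ht : 0 < t) (hr : 0 < r) :
    ∫ x, paretoPDFReal t r x * log (|x| * paretoPDFReal t r x) = log r - 1 := by
  have hzero : ∀ x ∉ Ici t, paretoPDFReal t r x * log (|x| * paretoPDFReal t r x) = 0 :=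
    fun x hx ↦ by rw [paretoPDFReal, if_neg (by simpa using hx), zero_mul]
  have hsplit : EqOn (fun x ↦ paretoPDFReal t r x * log (|x| * paretoPDFReal t r x))
      (fun x ↦ log r * paretoPDFReal t r x - r * (paretoPDFReal t r x * log (x / t))) (Ioi t) :=
    fun x hx ↦ by
      simp only [log_abs_mul_paretoPDFReal ht hr.ne' (le_of_lt hx)]
      ring
  rw [← setIntegral_eq_integral_of_forall_compl_eq_zero hzero, integral_Ici_eq_integral_Ioi,
    setIntegral_congr_fun measurableSet_Ioi hsplit,
    integral_sub ((integrableOn_Ioi_paretoPDFReal ht hr).const_mul _)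
      ((integrableOn_Ioi_paretoPDFReal_mul_log_div ht hr).const_mul _),
    integral_const_mul, integral_const_mul, integral_Ioi_paretoPDFReal ht hr,
    integral_Ioi_paretoPDFReal_mul_log_div ht hr, mul_one, mul_inv_cancel₀ hr.ne']

end ProbabilityTheory

/-- Differential floating-point entropy of the Pareto
distribution. -/
theorem fp_entropy_pareto
    (xm α : ℝ) (hxm : 0 < xm) (hα : 0 < α)
    (f : ℝ → ℝ)
    (hf : ∀ x, f x = if xm ≤ x then α * xm ^ α / x ^ (α + 1) else 0) :
    -∫ x, f x * Real.logb 2 (|x| * f x)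
      = Real.logb 2 (Real.exp 1 / α) := by
  have hf_pareto : f = paretoPDFReal xm α := funext fun x ↦ by
    rw [hf, paretoPDFReal]
    split_ifs with hx
    · rw [rpow_neg (hxm.trans_le hx).le, div_eq_mul_inv]
    · rfl
  simp only [hf_pareto, logb, ← mul_div_assoc, integral_div,
    integral_paretoPDFReal_mul_log_abs_mul hxm hα]
  rw [log_div (exp_ne_zero 1) hα.ne', log_exp]
  ring
end
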